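/- arXiv:2111.04956 — 2 statements merged into one kernel-verified Lean document; each statement's English description precedes it below -/
import Mathlib

section
/- Let S=(G,σ) be a degree-balanced parity signed graph on n vertices with G finite, simple and connected, where n is odd. Then G is the join P₂ ∨ I_{n−2} (an edge joined completely to n−2 independent vertices) or the complete graph K_n. -/
open scoped Classical
set_option linter.unusedSectionVars false
set_option maxHeartbeats 1000000

variable {V : Type*}

namespace PSG

/-- A bipartition of the vertex set given by `A` and its complement is
near-balanced (a parity-partition) if the sizes differ by at most 1. -/
def Balanced [Fintype V] [DecidableEq V] (A : Finset V) : Prop :=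
  |(A.card : ℤ) - ((Aᶜ : Finset V).card : ℤ)| ≤ 1

/-- The number of edges of `G` between `A` and its complement
(the number of negative edges of the associated parity signature). -/
def cut [Fintype V] [DecidableEq V] (G : SimpleGraph V) [DecidableRel G.Adj]
    (A : Finset V) : ℕ :=
  ((A ×ˢ (Aᶜ : Finset V)).filter fun p => G.Adj p.1 p.2).card

/-- `Σ⁻(G)`: the set of numbers of negative edges over all parity signatures. -/
def sigmaSet [Fintype V] [DecidableEq V] (G : SimpleGraph V) [DecidableRel G.Adj] :
    Set ℕ :=
  {k | ∃ A : Finset V, Balanced A ∧ k = cut G A}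

/-- The rna number `σ⁻(G)`. -/
noncomputable def rna [Fintype V] [DecidableEq V] (G : SimpleGraph V)
    [DecidableRel G.Adj] : ℕ :=
  sInf (sigmaSet G)

/-- `d⁻(v)`: number of negative edges (crossing edges) at `v`. -/
def dneg [Fintype V] [DecidableEq V] (G : SimpleGraph V) [DecidableRel G.Adj]
    (A : Finset V) (v : V) : ℕ :=
  (Finset.univ.filter fun u => G.Adj v u ∧ ¬(u ∈ A ↔ v ∈ A)).card

/-- `d⁺(v)`: number of positive edges (same-side edges) at `v`. -/
def dpos [Fintype V] [DecidableEq V] (G : SimpleGraph V) [DecidableRel G.Adj]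
    (A : Finset V) (v : V) : ℕ :=
  (Finset.univ.filter fun u => G.Adj v u ∧ (u ∈ A ↔ v ∈ A)).card

/-- The sign-difference `dᐃ(v) = d⁻(v) - d⁺(v)`. -/
def dDelta [Fintype V] [DecidableEq V] (G : SimpleGraph V) [DecidableRel G.Adj]
    (A : Finset V) (v : V) : ℤ :=
  (dneg G A v : ℤ) - (dpos G A v : ℤ)

/-- `f` is a parity-labeling witnessing that `σ` is a parity-signature of `G`. -/
def IsParityLabeling [Fintype V] (G : SimpleGraph V) (σ : V → V → ℤ)
    (f : V ≃ Fin (Fintype.card V)) : Prop :=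
  ∀ u v : V, G.Adj u v →
    σ u v = if ((f u : ℕ) % 2 = (f v : ℕ) % 2) then 1 else -1

/-- `(G, σ)` is a parity signed graph. -/
def IsParitySigned [Fintype V] (G : SimpleGraph V) (σ : V → V → ℤ) : Prop :=
  ∃ f : V ≃ Fin (Fintype.card V), IsParityLabeling G σ f

/-- The sign multiplier of a switch at the vertex set `U`. -/
def sgn [DecidableEq V] (U : Finset V) (v : V) : ℤ := if v ∈ U then -1 else 1

/-- The signature obtained from `σ` by switching at the set of vertices `U`. -/
def switch [DecidableEq V] (σ : V → V → ℤ) (U : Finset V) : V → V → ℤ :=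
  fun a b => sgn U a * sgn U b * σ a b

/-- One parity-switch step: switch at a vertex with odd label and one with even label. -/
def ParitySwitchStep [Fintype V] [DecidableEq V] (G : SimpleGraph V)
    (σ σ' : V → V → ℤ) : Prop :=
  ∃ f : V ≃ Fin (Fintype.card V), IsParityLabeling G σ f ∧
    ∃ u v : V, (f u : ℕ) % 2 = 1 ∧ (f v : ℕ) % 2 = 0 ∧ σ' = switch σ {u, v}

/-- `G` is the star `K_{1,n-1}` on its vertex set. -/
def IsStar (G : SimpleGraph V) : Prop :=
  ∃ c : V, ∀ a b : V, G.Adj a b ↔ ((a = c ∧ b ≠ c) ∨ (b = c ∧ a ≠ c))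

/-- The unordered pair `{a,b}` equals the unordered pair `{u,v}`. -/
def pairEq (a b u v : V) : Prop := (a = u ∧ b = v) ∨ (a = v ∧ b = u)

/-- `G` is the complete graph minus one edge. -/
def IsCompleteMinusEdge (G : SimpleGraph V) : Prop :=
  ∃ u v : V, u ≠ v ∧ ∀ a b : V, G.Adj a b ↔ (a ≠ b ∧ ¬ pairEq a b u v)

/-- `G` is the complete graph minus the three edges of a triangle. -/
def IsCompleteMinusTriangle (G : SimpleGraph V) : Prop :=
  ∃ u v w : V, u ≠ v ∧ u ≠ w ∧ v ≠ w ∧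
    ∀ a b : V, G.Adj a b ↔
      (a ≠ b ∧ ¬ (pairEq a b u v ∨ pairEq a b u w ∨ pairEq a b v w))

/-- `G` is the complete graph minus two nonadjacent (disjoint) edges. -/
def IsCompleteMinusTwoDisjointEdges (G : SimpleGraph V) : Prop :=
  ∃ u v x y : V, u ≠ v ∧ x ≠ y ∧ u ≠ x ∧ u ≠ y ∧ v ≠ x ∧ v ≠ y ∧
    ∀ a b : V, G.Adj a b ↔ (a ≠ b ∧ ¬ (pairEq a b u v ∨ pairEq a b x y))

/-- `G` is the complete graph minus two adjacent edges. -/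
def IsCompleteMinusTwoAdjacentEdges (G : SimpleGraph V) : Prop :=
  ∃ u v w : V, u ≠ v ∧ u ≠ w ∧ v ≠ w ∧
    ∀ a b : V, G.Adj a b ↔ (a ≠ b ∧ ¬ (pairEq a b u v ∨ pairEq a b u w))

/-- `G` is the join `P₂ ∨ I_{n-2}`: an edge joined completely to an independent set. -/
def IsEdgeJoinIndep (G : SimpleGraph V) : Prop :=
  ∃ a b : V, a ≠ b ∧
    ∀ x y : V, G.Adj x y ↔ (x ≠ y ∧ (x = a ∨ x = b ∨ y = a ∨ y = b))

section Helpers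
variable [Fintype V] [DecidableEq V] (G : SimpleGraph V) [DecidableRel G.Adj]

noncomputable def nb (B : Finset V) (v : V) : ℕ := (B.filter (fun u => G.Adj v u)).card

lemma dpos_mem {A : Finset V} {v : V} (hv : v ∈ A) : dpos G A v = nb G A v := by
  unfold dpos nb; congr 1; ext u
  simp only [Finset.mem_filter, Finset.mem_univ, true_and]
  constructor
  · rintro ⟨h1, h2⟩; exact ⟨h2.mpr hv, h1⟩
  · rintro ⟨h1, h2⟩; exact ⟨h2, ⟨fun _ => hv, fun _ => h1⟩⟩

lemma dpos_notMem {A : Finset V} {v : V} (hv : v ∉ A) : dpos G A v = nb G Aᶜ v := by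
  unfold dpos nb; congr 1; ext u
  simp only [Finset.mem_filter, Finset.mem_univ, true_and, Finset.mem_compl]
  constructor
  · rintro ⟨h1, h2⟩; exact ⟨fun hu => hv (h2.mp hu), h1⟩
  · rintro ⟨h1, h2⟩; exact ⟨h2, ⟨fun hu => absurd hu h1, fun hv' => absurd hv' hv⟩⟩

lemma dneg_mem {A : Finset V} {v : V} (hv : v ∈ A) : dneg G A v = nb G Aᶜ v := by
  unfold dneg nb; congr 1; ext u
  simp only [Finset.mem_filter, Finset.mem_univ, true_and, Finset.mem_compl]
  constructor
  · rintro ⟨h1, h2⟩; exact ⟨fun hu => h2 ⟨fun _ => hv, fun _ => hu⟩, h1⟩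
  · rintro ⟨h1, h2⟩; exact ⟨h2, fun hiff => h1 (hiff.mpr hv)⟩

lemma dneg_notMem {A : Finset V} {v : V} (hv : v ∉ A) : dneg G A v = nb G A v := by
  unfold dneg nb; congr 1; ext u
  simp only [Finset.mem_filter, Finset.mem_univ, true_and]
  constructor
  · rintro ⟨h1, h2⟩
    refine ⟨?_, h1⟩
    by_contra hu
    exact h2 ⟨fun h => absurd h hu, fun h => absurd h hv⟩
  · rintro ⟨h1, h2⟩; exact ⟨h2, fun hiff => hv (hiff.mp h1)⟩

lemma nb_add_one_le {B : Finset V} {v : V} (hv : v ∈ B) : nb G B v + 1 ≤ B.card := by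
  have hsub : B.filter (fun u => G.Adj v u) ⊆ B.erase v := by
    intro u hu
    rw [Finset.mem_filter] at hu
    exact Finset.mem_erase.mpr ⟨(G.ne_of_adj hu.2).symm, hu.1⟩
  have := Finset.card_le_card hsub
  have h2 : (B.erase v).card = B.card - 1 := Finset.card_erase_of_mem hv
  have h3 : 1 ≤ B.card := Finset.card_pos.mpr ⟨v, hv⟩
  unfold nb; omega

lemma nb_eq_of_all {B : Finset V} {v : V} (h : ∀ u ∈ B, G.Adj v u) : nb G B v = B.card := by
  unfold nb
  rw [Finset.filter_true_of_mem h]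

lemma nb_eq_zero {B : Finset V} {v : V} (h : ∀ u ∈ B, ¬ G.Adj v u) : nb G B v = 0 := by
  unfold nb
  rw [Finset.filter_false_of_mem h, Finset.card_empty]

lemma not_adj_of_nb_eq_zero {B : Finset V} {v : V} (h : nb G B v = 0) :
    ∀ u ∈ B, ¬ G.Adj v u := by
  unfold nb at h
  intro u hu hadj
  have : u ∈ B.filter (fun u => G.Adj v u) := Finset.mem_filter.mpr ⟨hu, hadj⟩
  rw [Finset.card_eq_zero.mp h] at this
  exact absurd this (Finset.notMem_empty u)

lemma adj_of_nb_eq {B : Finset V} {v : V} (hv : v ∈ B) (h : nb G B v + 1 = B.card) :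
    ∀ u ∈ B, u ≠ v → G.Adj v u := by
  have hsub : B.filter (fun u => G.Adj v u) ⊆ B.erase v := by
    intro u hu
    rw [Finset.mem_filter] at hu
    exact Finset.mem_erase.mpr ⟨(G.ne_of_adj hu.2).symm, hu.1⟩
  have h2 : (B.erase v).card = B.card - 1 := Finset.card_erase_of_mem hv
  have heq : B.filter (fun u => G.Adj v u) = B.erase v := by
    apply Finset.eq_of_subset_of_card_le hsub
    unfold nb at h; omega
  intro u hu hne
  have : u ∈ B.filter (fun u => G.Adj v u) := heq ▸ Finset.mem_erase.mpr ⟨hne, hu⟩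
  exact (Finset.mem_filter.mp this).2

lemma degree_eq_nb_add (A : Finset V) (v : V) : G.degree v = nb G A v + nb G Aᶜ v := by
  unfold nb
  rw [← Finset.card_union_of_disjoint, ← Finset.filter_union, Finset.union_compl]
  · simp [SimpleGraph.degree, SimpleGraph.neighborFinset_eq_filter]
  · exact Finset.disjoint_filter_filter disjoint_compl_right

lemma even_sum_deg : Even (∑ v : V, (G.degree v : ℤ)) := by
  have h0 := G.sum_degrees_eq_twice_card_edges
  refine ⟨(G.edgeFinset.card : ℤ), ?_⟩
  have h := congrArg (Nat.cast : ℕ → ℤ) h0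
  push_cast at h
  rw [h]; ring

lemma exists_adj_of_connected (hconn : G.Connected) {v w : V} (hvw : v ≠ w) :
    ∃ u, G.Adj v u := by
  obtain ⟨p⟩ := hconn.preconnected v w
  cases p with
  | nil => exact absurd rfl hvw
  | cons h _ => exact ⟨_, h⟩

lemma not_connected_of_split {A : Finset V} (hA : A.Nonempty) (hA' : (Aᶜ : Finset V).Nonempty)
    (h : ∀ u ∈ A, ∀ v ∈ (Aᶜ : Finset V), ¬ G.Adj u v) (hconn : G.Connected) : False := by
  obtain ⟨u, hu⟩ := hA
  obtain ⟨v, hv⟩ := hA'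
  have key : ∀ {x y : V}, G.Walk x y → x ∈ A → y ∈ A := by
    intro x y p
    induction p with
    | nil => exact id
    | @cons x' z y' hadj p ih =>
      intro hx
      by_cases hz : z ∈ A
      · exact ih hz
      · exact absurd hadj (h x' hx z (Finset.mem_compl.mpr hz))
  obtain ⟨p⟩ := hconn.preconnected u v
  exact Finset.mem_compl.mp hv (key p hu)

end Helpers

lemma main_nonconst [Fintype V] [DecidableEq V] (G : SimpleGraph V) [DecidableRel G.Adj]
    (hconn : G.Connected) (hodd : Odd (Fintype.card V))
    (A : Finset V) (hA : Balanced A)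
    (hdb : ∀ u ∈ A, ∀ v ∈ (Aᶜ : Finset V),
      dDelta G A u + dDelta G A v = if G.Adj u v then 2 else 0)
    {u₁ u₂ : V} (hu₁ : u₁ ∈ A) (hu₂ : u₂ ∈ A)
    (hne : dDelta G A u₁ ≠ dDelta G A u₂) : IsEdgeJoinIndep G := by
  classical
  have hab : A.card + (Aᶜ : Finset V).card = Fintype.card V := A.card_add_card_compl
  have hdb2 : ∀ u ∈ A, ∀ v ∈ (Aᶜ : Finset V),
      (G.Adj u v ∧ dDelta G A u + dDelta G A v = 2) ∨
      (¬ G.Adj u v ∧ dDelta G A u + dDelta G A v = 0) := by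
    intro u hu v hv
    have h := hdb u hu v hv
    by_cases hadj : G.Adj u v
    · left; exact ⟨hadj, by simpa [hadj] using h⟩
    · right; exact ⟨hadj, by simpa [hadj] using h⟩
  have hne12 : u₁ ≠ u₂ := fun h => hne (h ▸ rfl)
  have ha2 : 2 ≤ A.card := Finset.one_lt_card.mpr ⟨u₁, hu₁, u₂, hu₂, hne12⟩
  have hA' : -1 ≤ (A.card : ℤ) - ((Aᶜ : Finset V).card : ℤ) ∧
      (A.card : ℤ) - ((Aᶜ : Finset V).card : ℤ) ≤ 1 := abs_le.mp hA
  have hb1 : 1 ≤ (Aᶜ : Finset V).card := by omega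
  obtain ⟨v₀, hv₀⟩ := Finset.card_pos.mp hb1
  set c : ℤ := dDelta G A v₀ with hc
  -- all vertices of Aᶜ have sign-difference c
  have hyconst : ∀ v ∈ (Aᶜ : Finset V), dDelta G A v = c := by
    intro v hv
    rcases hdb2 u₁ hu₁ v hv with ⟨_, h1⟩ | ⟨_, h1⟩ <;>
    rcases hdb2 u₂ hu₂ v hv with ⟨_, h2⟩ | ⟨_, h2⟩ <;>
    rcases hdb2 u₁ hu₁ v₀ hv₀ with ⟨_, h3⟩ | ⟨_, h3⟩ <;>
    rcases hdb2 u₂ hu₂ v₀ hv₀ with ⟨_, h4⟩ | ⟨_, h4⟩ <;>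
    omega
  -- adjacency criterion across the cut
  have hcrit : ∀ u ∈ A, ∀ v ∈ (Aᶜ : Finset V), (G.Adj u v ↔ dDelta G A u = 2 - c) := by
    intro u hu v hv
    have hy := hyconst v hv
    rcases hdb2 u hu v hv with ⟨hadj, h1⟩ | ⟨hnadj, h1⟩
    · exact ⟨fun _ => by omega, fun _ => hadj⟩
    · refine ⟨fun h => absurd h hnadj, fun heq => ?_⟩
      exfalso; omega
  have hval : ∀ u ∈ A, dDelta G A u = 2 - c ∨ dDelta G A u = -c := by
    intro u hu
    rcases hdb2 u hu v₀ hv₀ with ⟨_, h1⟩ | ⟨_, h1⟩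
    · left; omega
    · right; omega
  set A1 : Finset V := A.filter (fun u => dDelta G A u = 2 - c) with hA1def
  set A0 : Finset V := A.filter (fun u => ¬ dDelta G A u = 2 - c) with hA0def
  have ha01 : A0.card + A1.card = A.card := by
    rw [hA0def, hA1def, add_comm]
    exact Finset.card_filter_add_card_filter_not (p := fun u => dDelta G A u = 2 - c)
  have hA1A : ∀ u ∈ A1, u ∈ A := fun u hu => (Finset.mem_filter.mp hu).1
  have hA0A : ∀ u ∈ A0, u ∈ A := fun u hu => (Finset.mem_filter.mp hu).1
  have hnonempty : A1.Nonempty ∧ A0.Nonempty := by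
    rcases hval u₁ hu₁ with h1 | h1 <;> rcases hval u₂ hu₂ with h2 | h2
    · exact absurd (h1.trans h2.symm) hne
    · exact ⟨⟨u₁, Finset.mem_filter.mpr ⟨hu₁, h1⟩⟩,
        ⟨u₂, Finset.mem_filter.mpr ⟨hu₂, by omega⟩⟩⟩
    · exact ⟨⟨u₂, Finset.mem_filter.mpr ⟨hu₂, h2⟩⟩,
        ⟨u₁, Finset.mem_filter.mpr ⟨hu₁, by omega⟩⟩⟩
    · exact absurd (h1.trans h2.symm) hne
  obtain ⟨⟨p₁, hp₁⟩, ⟨u0, hu0⟩⟩ := hnonempty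
  have hu0A : u0 ∈ A := hA0A u0 hu0
  -- neighbor counts
  have hdd : ∀ u ∈ A, dDelta G A u = (nb G Aᶜ u : ℤ) - nb G A u := by
    intro u hu; unfold dDelta; rw [dneg_mem G hu, dpos_mem G hu]
  have hddc : ∀ v ∈ (Aᶜ : Finset V), dDelta G A v = (nb G A v : ℤ) - nb G Aᶜ v := by
    intro v hv
    have hv' := Finset.mem_compl.mp hv
    unfold dDelta; rw [dneg_notMem G hv', dpos_notMem G hv']
  have hnbC1 : ∀ u ∈ A1, nb G Aᶜ u = (Aᶜ : Finset V).card := by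
    intro u hu
    exact nb_eq_of_all G (fun v hv => (hcrit u (hA1A u hu) v hv).mpr (Finset.mem_filter.mp hu).2)
  have hnbC0 : ∀ u ∈ A0, nb G Aᶜ u = 0 := by
    intro u hu
    refine nb_eq_zero G (fun v hv hadj => ?_)
    exact (Finset.mem_filter.mp hu).2 ((hcrit u (hA0A u hu) v hv).mp hadj)
  have hnbAv : ∀ v ∈ (Aᶜ : Finset V), nb G A v = A1.card := by
    intro v hv
    have : A.filter (fun u => G.Adj v u) = A1 := by
      ext u
      rw [hA1def, Finset.mem_filter, Finset.mem_filter]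
      constructor
      · rintro ⟨huA, hadj⟩; exact ⟨huA, (hcrit u huA v hv).mp hadj.symm⟩
      · rintro ⟨huA, hd⟩; exact ⟨huA, ((hcrit u huA v hv).mpr hd).symm⟩
    unfold nb; rw [this]
  have hE0 : ∀ u ∈ A0, (nb G A u : ℤ) = c := by
    intro u hu
    have h1 := hdd u (hA0A u hu)
    have h2 := hnbC0 u hu
    have h3 : dDelta G A u = -c := by
      rcases hval u (hA0A u hu) with h | h
      · exact absurd h (Finset.mem_filter.mp hu).2
      · exact h
    omega
  have hE1 : ∀ u ∈ A1, (nb G A u : ℤ) = ((Aᶜ : Finset V).card : ℤ) + c - 2 := by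
    intro u hu
    have h1 := hdd u (hA1A u hu)
    have h2 := hnbC1 u hu
    have h3 : dDelta G A u = 2 - c := (Finset.mem_filter.mp hu).2
    omega
  have hEc : ∀ v ∈ (Aᶜ : Finset V), (nb G Aᶜ v : ℤ) = (A1.card : ℤ) - c := by
    intro v hv
    have h1 := hddc v hv
    have h2 := hnbAv v hv
    have h3 := hyconst v hv
    omega
  -- c ≥ 1 by connectivity
  have hc1 : 1 ≤ c := by
    have h0 := hE0 u0 hu0
    by_contra h
    have hcz : nb G A u0 = 0 := by omega
    have hnbC : nb G Aᶜ u0 = 0 := hnbC0 u0 hu0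
    have hu0v₀ : u0 ≠ v₀ := fun h => (Finset.mem_compl.mp hv₀) (h ▸ hu0A)
    obtain ⟨w, hw⟩ := exists_adj_of_connected G hconn hu0v₀
    by_cases hwA : w ∈ A
    · exact not_adj_of_nb_eq_zero G hcz w hwA hw
    · exact not_adj_of_nb_eq_zero G hnbC w (Finset.mem_compl.mpr hwA) hw
  -- c ≤ 2
  have hble : ((Aᶜ : Finset V).card : ℤ) + c - 2 + 1 ≤ (A.card : ℤ) := by
    have h1 := hE1 p₁ hp₁
    have h2 := nb_add_one_le G (hA1A p₁ hp₁)
    omega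
  -- parity: c is even
  have heven : Even c := by
    have hdeg1 : ∀ u ∈ A1, (G.degree u : ℤ) = 2 * ((Aᶜ : Finset V).card : ℤ) + c - 2 := by
      intro u hu
      have h1 := hE1 u hu
      have h2 := hnbC1 u hu
      have h3 := degree_eq_nb_add G A u
      omega
    have hdeg0 : ∀ u ∈ A0, (G.degree u : ℤ) = c := by
      intro u hu
      have h1 := hE0 u hu
      have h2 := hnbC0 u hu
      have h3 := degree_eq_nb_add G A u
      omega
    have hdegC : ∀ v ∈ (Aᶜ : Finset V), (G.degree v : ℤ) = 2 * (A1.card : ℤ) - c := by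
      intro v hv
      have h1 := hEc v hv
      have h2 := hnbAv v hv
      have h3 := degree_eq_nb_add G A v
      omega
    have hsum : ∑ v : V, (G.degree v : ℤ) =
        (A0.card : ℤ) * c + (A1.card : ℤ) * (2 * ((Aᶜ : Finset V).card : ℤ) + c - 2)
          + ((Aᶜ : Finset V).card : ℤ) * (2 * (A1.card : ℤ) - c) := by
      rw [← Finset.sum_add_sum_compl A (fun v => (G.degree v : ℤ))]
      rw [← Finset.sum_filter_add_sum_filter_not A (fun u => dDelta G A u = 2 - c)
        (fun v => (G.degree v : ℤ))]
      rw [Finset.sum_congr rfl hdeg1, Finset.sum_congr rfl hdeg0,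
        Finset.sum_congr rfl hdegC]
      simp only [Finset.sum_const, nsmul_eq_mul]
      ring
    have hS := even_sum_deg G
    rw [hsum] at hS
    have hm : ((A0.card : ℤ) + (A1.card : ℤ) - ((Aᶜ : Finset V).card : ℤ)) % 2 = 1 := by
      have hk := Nat.odd_iff.mp hodd
      omega
    rcases Int.even_or_odd c with hcc | hcc
    · exact hcc
    · exfalso
      have hodd1 : Odd (c * ((A0.card : ℤ) + (A1.card : ℤ) - ((Aᶜ : Finset V).card : ℤ))) :=
        hcc.mul (Int.odd_iff.mpr hm)
      have heq : c * ((A0.card : ℤ) + (A1.card : ℤ) - ((Aᶜ : Finset V).card : ℤ)) =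
          ((A0.card : ℤ) * c + (A1.card : ℤ) * (2 * ((Aᶜ : Finset V).card : ℤ) + c - 2)
          + ((Aᶜ : Finset V).card : ℤ) * (2 * (A1.card : ℤ) - c))
          - 2 * (2 * (A1.card : ℤ) * ((Aᶜ : Finset V).card : ℤ) - (A1.card : ℤ)) := by
        ring
      have heven2 : Even (c * ((A0.card : ℤ) + (A1.card : ℤ) - ((Aᶜ : Finset V).card : ℤ))) := by
        rw [heq]
        exact hS.sub (even_two_mul _)
      exact (Int.not_odd_iff_even.mpr heven2) hodd1
  have hc2 : c = 2 := by
    rcases heven with ⟨r, hr⟩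
    omega
  have hbeq : ((Aᶜ : Finset V).card : ℤ) = (A.card : ℤ) - 1 := by omega
  -- A1 vertices are adjacent to everything in A
  have hadjall : ∀ u ∈ A1, ∀ w ∈ A, w ≠ u → G.Adj u w := by
    intro u hu
    refine adj_of_nb_eq G (hA1A u hu) ?_
    have := hE1 u hu
    omega
  -- A1 ⊆ neighbors of any A0 vertex
  have hsuball : ∀ u ∈ A0, A1 ⊆ A.filter (fun w => G.Adj u w) := by
    intro u hu p hp
    have hpA := hA1A p hp
    have hpu : p ≠ u := by
      intro h
      rw [h] at hp
      exact (Finset.mem_filter.mp hu).2 (Finset.mem_filter.mp hp).2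
    exact Finset.mem_filter.mpr ⟨hpA, (hadjall p hp u (hA0A u hu) hpu.symm).symm⟩
  have hnbrfl : ∀ u : V, (A.filter (fun w => G.Adj u w)).card = nb G A u := fun u => rfl
  have ha1le : A1.card ≤ 2 := by
    have h1 := Finset.card_le_card (hsuball u0 hu0)
    have h2 := hE0 u0 hu0
    have h3 := hnbrfl u0
    omega
  have ha1ge : 2 ≤ A1.card := by
    have h1 := hEc v₀ hv₀
    have h2 : (0:ℤ) ≤ (nb G Aᶜ v₀ : ℤ) := Int.ofNat_nonneg _
    omega
  have ha1eq : A1.card = 2 := le_antisymm ha1le ha1ge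
  have hA0nbr : ∀ u ∈ A0, A.filter (fun w => G.Adj u w) = A1 := by
    intro u hu
    refine (Finset.eq_of_subset_of_card_le (hsuball u hu) ?_).symm
    have h2 := hE0 u hu
    have h3 := hnbrfl u
    omega
  -- Aᶜ is independent
  have hindep : ∀ v ∈ (Aᶜ : Finset V), ∀ w ∈ (Aᶜ : Finset V), ¬ G.Adj v w := by
    intro v hv
    refine not_adj_of_nb_eq_zero G ?_
    have := hEc v hv
    omega
  -- A0 has no cross edges
  have hcross0 : ∀ u ∈ A0, ∀ v ∈ (Aᶜ : Finset V), ¬ G.Adj u v := by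
    intro u hu v hv hadj
    exact (Finset.mem_filter.mp hu).2 ((hcrit u (hA0A u hu) v hv).mp hadj)
  obtain ⟨p, q, hpq, hA1eq⟩ := Finset.card_eq_two.mp ha1eq
  have hpA1 : p ∈ A1 := by rw [hA1eq]; simp
  have hqA1 : q ∈ A1 := by rw [hA1eq]; simp
  have huniv : ∀ z ∈ A1, ∀ w : V, w ≠ z → G.Adj z w := by
    intro z hz w hw
    by_cases hwA : w ∈ A
    · exact hadjall z hz w hwA hw
    · exact (hcrit z (hA1A z hz) w (Finset.mem_compl.mpr hwA)).mpr (Finset.mem_filter.mp hz).2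
  refine ⟨p, q, hpq, fun x y => ?_⟩
  constructor
  · intro hxy
    refine ⟨hxy.ne, ?_⟩
    by_contra hcon
    push_neg at hcon
    obtain ⟨hxp, hxq, hyp, hyq⟩ := hcon
    have hxA1 : x ∉ A1 := by rw [hA1eq]; simp [hxp, hxq]
    have hyA1 : y ∉ A1 := by rw [hA1eq]; simp [hyp, hyq]
    by_cases hxA : x ∈ A
    · have hx0 : x ∈ A0 := Finset.mem_filter.mpr
        ⟨hxA, fun h => hxA1 (Finset.mem_filter.mpr ⟨hxA, h⟩)⟩
      by_cases hyA : y ∈ A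
      · have hmem : y ∈ A.filter (fun w => G.Adj x w) := Finset.mem_filter.mpr ⟨hyA, hxy⟩
        rw [hA0nbr x hx0] at hmem
        exact hyA1 hmem
      · exact hcross0 x hx0 y (Finset.mem_compl.mpr hyA) hxy
    · by_cases hyA : y ∈ A
      · have hy0 : y ∈ A0 := Finset.mem_filter.mpr
          ⟨hyA, fun h => hyA1 (Finset.mem_filter.mpr ⟨hyA, h⟩)⟩
        exact hcross0 y hy0 x (Finset.mem_compl.mpr hxA) hxy.symm
      · exact hindep x (Finset.mem_compl.mpr hxA) y (Finset.mem_compl.mpr hyA) hxy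
  · rintro ⟨hne', h | h | h | h⟩
    · subst h; exact huniv x hpA1 y hne'.symm
    · subst h; exact huniv x hqA1 y hne'.symm
    · subst h; exact (huniv y hpA1 x hne').symm
    · subst h; exact (huniv y hqA1 x hne').symm

lemma dDelta_compl [Fintype V] [DecidableEq V] (G : SimpleGraph V) [DecidableRel G.Adj]
    (A : Finset V) (v : V) : dDelta G Aᶜ v = dDelta G A v := by
  have h1 : dneg G Aᶜ v = dneg G A v := by
    unfold dneg; congr 1; ext u
    simp only [Finset.mem_filter, Finset.mem_univ, true_and, Finset.mem_compl]
    tauto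
  have h2 : dpos G Aᶜ v = dpos G A v := by
    unfold dpos; congr 1; ext u
    simp only [Finset.mem_filter, Finset.mem_univ, true_and, Finset.mem_compl]
    tauto
  unfold dDelta; rw [h1, h2]

/-- a degree-balanced parity signed graph on an odd number of
vertices, with connected underlying graph, is `P₂ ∨ I_{n-2}` or complete. -/
theorem stmt5 [Fintype V] [DecidableEq V] (G : SimpleGraph V) [DecidableRel G.Adj]
    (hconn : G.Connected) (hodd : Odd (Fintype.card V))
    (A : Finset V) (hA : Balanced A)
    (hdb : ∀ u ∈ A, ∀ v ∈ (Aᶜ : Finset V),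
      dDelta G A u + dDelta G A v = if G.Adj u v then 2 else 0) :
    IsEdgeJoinIndep G ∨ G = ⊤ := by
  classical
  by_cases hnc : ∃ u₁ ∈ A, ∃ u₂ ∈ A, dDelta G A u₁ ≠ dDelta G A u₂
  · obtain ⟨u₁, hu₁, u₂, hu₂, h⟩ := hnc
    exact Or.inl (main_nonconst G hconn hodd A hA hdb hu₁ hu₂ h)
  by_cases hnc' : ∃ v₁ ∈ (Aᶜ : Finset V), ∃ v₂ ∈ (Aᶜ : Finset V),
      dDelta G A v₁ ≠ dDelta G A v₂
  · obtain ⟨v₁, hv₁, v₂, hv₂, h⟩ := hnc'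
    refine Or.inl (main_nonconst G hconn hodd Aᶜ ?_ ?_ hv₁ hv₂ ?_)
    · unfold Balanced
      rw [compl_compl, abs_sub_comm]
      exact hA
    · intro u hu v hv
      rw [compl_compl] at hv
      have h' := hdb v hv u hu
      rw [dDelta_compl G A u, dDelta_compl G A v]
      by_cases hadj : G.Adj u v
      · rw [if_pos hadj]
        rw [if_pos hadj.symm] at h'
        omega
      · rw [if_neg hadj]
        rw [if_neg (fun hh => hadj (SimpleGraph.Adj.symm hh))] at h'
        omega
    · rw [dDelta_compl G A v₁, dDelta_compl G A v₂]
      exact h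
  push_neg at hnc hnc'
  right
  by_cases hn1 : Fintype.card V ≤ 1
  · ext x y
    simp only [SimpleGraph.top_adj]
    constructor
    · exact fun h => h.ne
    · intro h
      exact absurd (Fintype.card_le_one_iff.mp hn1 x y) h
  have hab := A.card_add_card_compl
  have hA' := abs_le.mp hA
  have ha1 : 1 ≤ A.card := by omega
  have hb1 : 1 ≤ (Aᶜ : Finset V).card := by omega
  obtain ⟨u, hu⟩ := Finset.card_pos.mp ha1
  obtain ⟨v, hv⟩ := Finset.card_pos.mp hb1
  by_cases hadj : G.Adj u v
  · -- the cut is complete; G is complete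
    have hcross : ∀ u' ∈ A, ∀ v' ∈ (Aᶜ : Finset V), G.Adj u' v' := by
      intro u' hu' v' hv'
      have h1 := hdb u hu v hv
      have h2 := hdb u' hu' v' hv'
      rw [if_pos hadj] at h1
      have e1 := hnc u' hu' u hu
      have e2 := hnc' v' hv' v hv
      by_contra hn
      rw [if_neg hn] at h2
      omega
    have hnbAC : ∀ u' ∈ A, nb G Aᶜ u' = (Aᶜ : Finset V).card :=
      fun u' hu' => nb_eq_of_all G (fun w hw => hcross u' hu' w hw)
    have hnbA : ∀ v' ∈ (Aᶜ : Finset V), nb G A v' = A.card :=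
      fun v' hv' => nb_eq_of_all G (fun w hw => (hcross w hw v' hv').symm)
    have hkey : ∀ u' ∈ A, ∀ v' ∈ (Aᶜ : Finset V),
        (nb G A u' : ℤ) = (A.card : ℤ) - 1 ∧
        (nb G Aᶜ v' : ℤ) = ((Aᶜ : Finset V).card : ℤ) - 1 := by
      intro u' hu' v' hv'
      have h2 := hdb u' hu' v' hv'
      rw [if_pos (hcross u' hu' v' hv')] at h2
      have hd1 : dDelta G A u' = (nb G Aᶜ u' : ℤ) - nb G A u' := by
        unfold dDelta; rw [dneg_mem G hu', dpos_mem G hu']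
      have hd2 : dDelta G A v' = (nb G A v' : ℤ) - nb G Aᶜ v' := by
        have hv'' := Finset.mem_compl.mp hv'
        unfold dDelta; rw [dneg_notMem G hv'', dpos_notMem G hv'']
      have hble1 := nb_add_one_le G hu'
      have hble2 := nb_add_one_le G hv'
      have hc1 := hnbAC u' hu'
      have hc2 := hnbA v' hv'
      constructor <;> omega
    ext x y
    simp only [SimpleGraph.top_adj]
    constructor
    · exact fun h => h.ne
    · intro hne'
      by_cases hxA : x ∈ A <;> by_cases hyA : y ∈ A
      · have h1 := (hkey x hxA v hv).1
        refine adj_of_nb_eq G hxA ?_ y hyA hne'.symm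
        omega
      · exact hcross x hxA y (Finset.mem_compl.mpr hyA)
      · exact (hcross y hyA x (Finset.mem_compl.mpr hxA)).symm
      · have h1 := (hkey u hu x (Finset.mem_compl.mpr hxA)).2
        refine adj_of_nb_eq G (Finset.mem_compl.mpr hxA) ?_ y (Finset.mem_compl.mpr hyA) hne'.symm
        omega
  · -- the cut is empty; contradiction with connectedness
    exfalso
    have hcross : ∀ u' ∈ A, ∀ v' ∈ (Aᶜ : Finset V), ¬ G.Adj u' v' := by
      intro u' hu' v' hv' hn
      have h1 := hdb u hu v hv
      have h2 := hdb u' hu' v' hv'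
      rw [if_neg hadj] at h1
      rw [if_pos hn] at h2
      have e1 := hnc u' hu' u hu
      have e2 := hnc' v' hv' v hv
      omega
    exact not_connected_of_split G ⟨u, hu⟩ ⟨v, hv⟩ hcross hconn


end PSG
end

section
/- Let G be a finite simple connected graph on n vertices. Then σ⁻(G) = ⌈n/2⌉·⌊n/2⌋ if and only if G = K_n. -/
open scoped Classical

variable {V : Type*}

namespace PSG

/-! The cut of a balanced partition `(A, Aᶜ)` has at most `|A| |Aᶜ| = ⌈n/2⌉ ⌊n/2⌋` edges,
with equality exactly when every pair across the partition is adjacent. In `K_n` this holds for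
every balanced partition; if `u, v` are non-adjacent, a balanced partition separating them has a
strictly smaller cut. -/

section

variable [Fintype V] [DecidableEq V]

lemma Balanced.card_mul_card_compl {A : Finset V} (hA : Balanced A) :
    A.card * Aᶜ.card = ((Fintype.card V + 1) / 2) * (Fintype.card V / 2) := by
  have hcard := A.card_add_card_compl
  rw [Balanced, abs_le] at hA
  obtain ⟨h₁, h₂⟩ | ⟨h₁, h₂⟩ : (A.card = (Fintype.card V + 1) / 2 ∧
      Aᶜ.card = Fintype.card V / 2) ∨
      (A.card = Fintype.card V / 2 ∧ Aᶜ.card = (Fintype.card V + 1) / 2) := by omega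
  · rw [h₁, h₂]
  · rw [h₁, h₂, Nat.mul_comm]

lemma balanced_of_card_eq {A : Finset V} (hA : A.card = Fintype.card V / 2) : Balanced A := by
  have hcard := A.card_add_card_compl
  rw [Balanced, abs_le]
  omega

lemma exists_balanced : ∃ A : Finset V, Balanced A := by
  obtain ⟨A, -, hA⟩ := (Finset.univ : Finset V).exists_subset_card_eq
    (n := Fintype.card V / 2) (by simp [Nat.div_le_self])
  exact ⟨A, balanced_of_card_eq hA⟩

lemma exists_balanced_mem_notMem {u v : V} (huv : u ≠ v) :
    ∃ A : Finset V, Balanced A ∧ u ∈ A ∧ v ∉ A := by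
  have hn : 2 ≤ Fintype.card V := Fintype.one_lt_card_iff_nontrivial.2 ⟨u, v, huv⟩
  obtain ⟨A, huA, hAv, hA⟩ := Finset.exists_subsuperset_card_eq
    (s := {u}) (t := Finset.univ.erase v) (n := Fintype.card V / 2)
    (by simpa using huv) (by simp; omega) (by simp; omega)
  exact ⟨A, balanced_of_card_eq hA, huA (Finset.mem_singleton_self u),
    fun hv => by simpa using hAv hv⟩

lemma cut_lt_card_mul_card_compl {G : SimpleGraph V} [DecidableRel G.Adj] {A : Finset V}
    {u v : V} (hu : u ∈ A) (hv : v ∉ A) (huv : ¬G.Adj u v) :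
    cut G A < A.card * Aᶜ.card := by
  rw [← Finset.card_product]
  refine Finset.card_lt_card ⟨Finset.filter_subset _ _, fun hsub => huv ?_⟩
  have hmem : (u, v) ∈ A ×ˢ Aᶜ := Finset.mem_product.2 ⟨hu, Finset.mem_compl.2 hv⟩
  exact (Finset.mem_filter.1 (hsub hmem)).2

lemma cut_top [DecidableRel (⊤ : SimpleGraph V).Adj] (A : Finset V) :
    cut (⊤ : SimpleGraph V) A = A.card * Aᶜ.card := by
  rw [← Finset.card_product, cut, Finset.filter_true_of_mem]
  rintro ⟨a, b⟩ hab
  obtain ⟨ha, hb⟩ := Finset.mem_product.1 hab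
  exact (SimpleGraph.top_adj a b).2 fun h => Finset.mem_compl.1 hb (h ▸ ha)

lemma rna_le_cut (G : SimpleGraph V) [DecidableRel G.Adj] {A : Finset V} (hA : Balanced A) :
    rna G ≤ cut G A :=
  Nat.sInf_le ⟨A, hA, rfl⟩

lemma exists_balanced_rna_eq_cut (G : SimpleGraph V) [DecidableRel G.Adj] :
    ∃ A : Finset V, Balanced A ∧ rna G = cut G A := by
  obtain ⟨A, hA⟩ := exists_balanced (V := V)
  obtain ⟨B, hB, hcut⟩ := Nat.sInf_mem (s := sigmaSet G) ⟨cut G A, A, hA, rfl⟩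
  exact ⟨B, hB, hcut⟩

lemma rna_top [DecidableRel (⊤ : SimpleGraph V).Adj] :
    rna (⊤ : SimpleGraph V) = ((Fintype.card V + 1) / 2) * (Fintype.card V / 2) := by
  obtain ⟨A, hA, hrna⟩ := exists_balanced_rna_eq_cut (⊤ : SimpleGraph V)
  rw [hrna, cut_top, hA.card_mul_card_compl]

lemma rna_lt_of_ne_top {G : SimpleGraph V} [DecidableRel G.Adj] (hG : G ≠ ⊤) :
    rna G < ((Fintype.card V + 1) / 2) * (Fintype.card V / 2) := by
  obtain ⟨u, v, huv, hnadj⟩ := SimpleGraph.ne_top_iff_exists_not_adj.1 hG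
  obtain ⟨A, hA, hu, hv⟩ := exists_balanced_mem_notMem huv
  calc rna G ≤ cut G A := rna_le_cut G hA
    _ < A.card * Aᶜ.card := cut_lt_card_mul_card_compl hu hv hnadj
    _ = _ := hA.card_mul_card_compl

end

theorem stmt10_general [Fintype V] [DecidableEq V] (G : SimpleGraph V) [DecidableRel G.Adj] :
    rna G = ((Fintype.card V + 1) / 2) * (Fintype.card V / 2) ↔ G = ⊤ := by
  constructor
  · intro hrna
    by_contra hG
    exact (rna_lt_of_ne_top hG).ne hrna
  · rintro rfl
    exact rna_top

/-- `σ⁻(G) = ⌈n/2⌉·⌊n/2⌋` iff `G = K_n`. -/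
theorem stmt10 [Fintype V] [DecidableEq V] (G : SimpleGraph V) [DecidableRel G.Adj]
    (hconn : G.Connected) :
    rna G = ((Fintype.card V + 1) / 2) * (Fintype.card V / 2) ↔ G = ⊤ :=
  stmt10_general G

end PSG
end
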